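/- arXiv:1905.00305 — 2 statements merged into one kernel-verified Lean document; each statement's English description precedes it below -/
import Mathlib

section
/- Let G be a finite simple connected graph with at least two vertices that is neither a star graph nor an edge-star graph, and let S be a vertex cover of G with |S| = k. Then G admits a k-ONCF-coloring; that is, χ_ON(G) ≤ k. -/
/-- A coloring `c` of the vertices of `G` is an open-neighborhood conflict-free
coloring if every open neighborhood `N(v)` contains a vertex whose color is unique
in `N(v)`. -/
def IsONCF {V C : Type*} (G : SimpleGraph V) (c : V → C) : Prop :=
  ∀ v : V, ∃ u ∈ G.neighborSet v, ∀ w ∈ G.neighborSet v, w ≠ u → c w ≠ c u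

/-- `G` is a star graph: some vertex `u` is adjacent to every other vertex,
and every edge of `G` is incident to `u`. -/
def IsStarGraph {V : Type*} (G : SimpleGraph V) : Prop :=
  ∃ u : V, (∀ w : V, w ≠ u → G.Adj u w) ∧ (∀ ⦃a b : V⦄, G.Adj a b → a = u ∨ b = u)

/-- `G` is an edge-star graph: there is a central edge `{u, v}` such that every
other vertex `w` has open neighborhood exactly `{u, v}`. -/
def IsEdgeStarGraph {V : Type*} (G : SimpleGraph V) : Prop :=
  ∃ u v : V, G.Adj u v ∧ ∀ w : V, w ≠ u → w ≠ v → G.neighborSet w = {u, v}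

/-!
Pass to a minimum vertex cover `S` and colour every vertex of `S` by itself; a vertex outside `S`
is then satisfied by any neighbour, since all its neighbours lie in `S`. Outside `S`, a vertex
`y a` matched to some `a` gets colour `a` and all others get a default colour `β ∈ S`. A vertex of
`S` is then satisfied by a neighbour `t ∈ S` whose colour does not reappear outside `S`, or by a
matched neighbour `y a`. Minimality of `S` gives Hall's condition for independent subsets of `S`,
hence the matchings. How `β` and the matching are chosen depends on the subgraph induced by `S`:
it has an isolated vertex, or a path on three vertices, or else it is a perfect matching, where the
only obstruction is the edge-star.
-/

open Finset Function

theorem IsONCF.comp {V C D : Type*} {G : SimpleGraph V} {c : V → C} (h : IsONCF G c)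
    {f : C → D} (hf : Injective f) : IsONCF G (f ∘ c) := by
  intro v
  obtain ⟨u, hu, huniq⟩ := h v
  exact ⟨u, hu, fun w hw hwu hc => huniq w hw hwu (hf hc)⟩

theorem IsONCF.of_comp {V C D : Type*} {G : SimpleGraph V} {c : V → C} {f : C → D}
    (h : IsONCF G (f ∘ c)) : IsONCF G c := by
  intro v
  obtain ⟨u, hu, huniq⟩ := h v
  exact ⟨u, hu, fun w hw hwu hc => huniq w hw hwu (congrArg f hc)⟩

namespace SimpleGraph

variable {V : Type*} {G : SimpleGraph V}

theorem Reachable.mem_of_forall_adj_mem {K : Set V} (hK : ∀ u ∈ K, ∀ w, G.Adj u w → w ∈ K)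
    {u v : V} (h : G.Reachable u v) (hu : u ∈ K) : v ∈ K :=
  h.mem_subgraphVerts (H := (⊤ : G.Subgraph).induce K) (fun x hx w hxw => ⟨hx, hK x hx w hxw, hxw⟩)
    hu

theorem Connected.isStarGraph_of_pendant_neighbors (hconn : G.Connected) {u : V}
    (h : ∀ v, G.Adj u v → ∀ w, G.Adj v w → w = u) : IsStarGraph G := by
  have hK : ∀ x ∈ {x | x = u ∨ G.Adj u x}, ∀ w, G.Adj x w → w ∈ {x | x = u ∨ G.Adj u x} := by
    rintro x (rfl | hux) w hxw
    exacts [Or.inr hxw, Or.inl (h x hux w hxw)]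
  refine ⟨u, fun w hw => ((hconn u w).mem_of_forall_adj_mem hK (Or.inl rfl)).resolve_left hw,
    fun a b hab => ?_⟩
  rcases (hconn u a).mem_of_forall_adj_mem hK (Or.inl rfl) with rfl | hua
  exacts [Or.inl rfl, Or.inr (h a hua b hab)]

theorem Connected.exists_adj_of_not_isStarGraph (hconn : G.Connected) (hstar : ¬ IsStarGraph G)
    (v : V) : ∃ u, G.Adj v u := by
  by_contra! h
  exact hstar (hconn.isStarGraph_of_pendant_neighbors fun w hw => absurd hw (h w))

theorem isEdgeStarGraph_of_isVertexCover_pair {a b : V} (hab : G.Adj a b)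
    (hS : G.IsVertexCover {a, b}) (h : ∀ w, w ≠ a → w ≠ b → G.Adj w a ∧ G.Adj w b) :
    IsEdgeStarGraph G := by
  refine ⟨a, b, hab, fun w hwa hwb => Set.ext fun z => ⟨fun hwz => ?_, ?_⟩⟩
  · exact (hS hwz).resolve_left (by simp [hwa, hwb])
  · rintro (rfl | rfl)
    exacts [(h w hwa hwb).1, (h w hwa hwb).2]

variable {S : Finset V}

def IsMinVertexCover (G : SimpleGraph V) (S : Finset V) : Prop :=
  G.IsVertexCover S ∧ ∀ T : Finset V, G.IsVertexCover T → #S ≤ #T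

theorem IsVertexCover.exists_isMinVertexCover (hS : G.IsVertexCover S) :
    ∃ T, G.IsMinVertexCover T ∧ #T ≤ #S := by
  classical
  have h : ∃ n, ∃ T : Finset V, G.IsVertexCover T ∧ #T = n := ⟨_, S, hS, rfl⟩
  obtain ⟨T, hT, hcard⟩ := Nat.find_spec h
  exact ⟨T, ⟨hT, fun T' hT' => hcard ▸ Nat.find_min' h ⟨T', hT', rfl⟩⟩,
    hcard ▸ Nat.find_min' h ⟨S, hS, rfl⟩⟩

/-- Hall's condition holds for an independent `X ⊆ S` because `(S \ X) ∪ (N(X) \ S)` is again a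
vertex cover. -/
theorem IsMinVertexCover.exists_injOn_adj_notMem [Fintype V] (hS : G.IsMinVertexCover S)
    {X : Set V} (hXS : X ⊆ S) (hX : G.IsIndepSet X) :
    ∃ y : V → V, Set.InjOn y X ∧ ∀ a ∈ X, G.Adj a (y a) ∧ y a ∉ S := by
  classical
  have hall : ∀ A : Finset X, #A ≤ #{v | ∃ a ∈ A, G.Adj a v ∧ v ∉ S} := by
    intro A
    set N : Finset V := {v | ∃ a ∈ A, G.Adj a v ∧ v ∉ S}
    set B : Finset V := A.map (Embedding.subtype _)
    have hBS : B ⊆ S := by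
      intro b hb
      obtain ⟨a, -, rfl⟩ := mem_map.mp hb
      exact hXS a.2
    have hcover : ∀ u w, G.Adj u w → u ∈ S → u ∈ S \ B ∪ N ∨ w ∈ S \ B ∪ N := by
      intro u w huw hu
      by_cases huB : u ∈ B
      · obtain ⟨a, ha, rfl⟩ := mem_map.mp huB
        by_cases hw : w ∈ S
        · refine Or.inr (mem_union_left _ (mem_sdiff.mpr ⟨hw, fun hwB => ?_⟩))
          obtain ⟨b, -, rfl⟩ := mem_map.mp hwB
          exact hX a.2 b.2 huw.ne huw
        · exact Or.inr (mem_union_right _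
            (mem_filter.mpr ⟨mem_univ _, a, ha, huw, hw⟩))
      · exact Or.inl (mem_union_left _ (mem_sdiff.mpr ⟨hu, huB⟩))
    have hT : G.IsVertexCover ↑(S \ B ∪ N) := fun u w huw =>
      (hS.1 huw).elim (hcover u w huw) fun hw => (hcover w u huw.symm hw).symm
    have hmin : #S ≤ #(S \ B ∪ N) := hS.2 _ hT
    have hunion : #(S \ B ∪ N) ≤ #(S \ B) + #N := card_union_le _ _
    have hsdiff : #(S \ B) = #S - #B := card_sdiff_of_subset hBS
    have hBS' : #B ≤ #S := card_le_card hBS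
    have hB : #B = #A := card_map _
    omega
  obtain ⟨f, hf, hfadj⟩ :=
    (Fintype.all_card_le_filter_rel_iff_exists_injective (fun (a : X) v => G.Adj a v ∧ v ∉ S)).mp
      hall
  refine ⟨fun v => if h : v ∈ X then f ⟨v, h⟩ else v, fun a ha b hb hab => ?_, fun a ha => ?_⟩
  · exact congrArg Subtype.val (hf (by simpa [ha, hb] using hab))
  · simpa [ha] using hfadj ⟨a, ha⟩

theorem IsMinVertexCover.exists_injOn_adj_notMem_mem [Fintype V] (hS : G.IsMinVertexCover S)
    {X W : Set V} (hXS : X ⊆ S) (hX : G.IsIndepSet X) {d v : V} (hd : d ∈ X) (hdv : G.Adj d v)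
    (hvS : v ∉ S) (hvW : v ∈ W) :
    ∃ y : V → V, Set.InjOn y X ∧ (∀ a ∈ X, G.Adj a (y a) ∧ y a ∉ S) ∧ ∃ a ∈ X, y a ∈ W := by
  classical
  obtain ⟨y, hy, hyadj⟩ := hS.exists_injOn_adj_notMem hXS hX
  by_cases hhit : ∃ a ∈ X, y a ∈ W
  · exact ⟨y, hy, hyadj, hhit⟩
  push Not at hhit
  have hv : ∀ a ∈ X, y a ≠ v := fun a ha h => hhit a ha (h ▸ hvW)
  refine ⟨update y d v, fun a ha b hb hab => ?_, fun a ha => ?_, d, hd, by simpa using hvW⟩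
  · by_cases had : a = d <;> by_cases hbd : b = d <;>
      simp_all [update_of_ne, hy.eq_iff]
  · by_cases had : a = d
    · subst had
      simpa using ⟨hdv, hvS⟩
    · simpa [had] using hyadj a ha

variable {A : Set V} {y : V → V} {β x : V}

open Classical in
noncomputable def matchingColoring (S : Finset V) (A : Set V) (y : V → V) (β x : V) : V :=
  if x ∈ S then x else if h : ∃ a ∈ A, y a = x then h.choose else β

theorem matchingColoring_of_mem (hx : x ∈ S) : matchingColoring S A y β x = x := if_pos hx

theorem matchingColoring_apply (hy : Set.InjOn y A) (hyS : ∀ a ∈ A, y a ∉ S) {a : V}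
    (ha : a ∈ A) : matchingColoring S A y β (y a) = a := by
  have h : ∃ a' ∈ A, y a' = y a := ⟨a, ha, rfl⟩
  rw [matchingColoring, if_neg (hyS a ha), dif_pos h]
  exact hy h.choose_spec.1 ha h.choose_spec.2

theorem eq_of_matchingColoring_eq (hβA : β ∉ A) (hx : x ∉ S) {a : V} (ha : a ∈ A)
    (h : matchingColoring S A y β x = a) : x = y a := by
  rw [matchingColoring, if_neg hx] at h
  split_ifs at h with hex
  · exact h ▸ hex.choose_spec.2.symm
  · exact absurd (h ▸ ha) hβA

theorem matchingColoring_mem_or (hx : x ∉ S) :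
    matchingColoring S A y β x ∈ A ∨ matchingColoring S A y β x = β := by
  rw [matchingColoring, if_neg hx]
  split_ifs with hex
  exacts [Or.inl hex.choose_spec.1, Or.inr rfl]

/-- A vertex `s ∈ S` sees the colour of a neighbour `t ∈ S` only at `t` and at `y t`, and the
colour `a` of `y a` only at `a` and at `y a`. -/
theorem exists_isONCF_of_matching (hS : G.IsVertexCover S) (hnbr : ∀ v, ∃ u, G.Adj v u)
    (hβ : β ∈ S) (hAS : A ⊆ S) (hβA : β ∉ A) (hy : Set.InjOn y A) (hyS : ∀ a ∈ A, y a ∉ S)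
    (hwit : ∀ s ∈ S, (∃ t ∈ S, G.Adj s t ∧ t ≠ β ∧ (t ∈ A → ¬ G.Adj s (y t))) ∨
      ∃ a ∈ A, ¬ G.Adj s a ∧ G.Adj s (y a)) :
    ∃ c : V → S, IsONCF G c := by
  set c := matchingColoring S A y β
  have hcS : ∀ x ∈ S, c x = x := fun x => matchingColoring_of_mem
  have hcy : ∀ a ∈ A, c (y a) = a := fun a => matchingColoring_apply hy hyS
  have hceq : ∀ x ∉ S, ∀ a ∈ A, c x = a → x = y a := fun x hx a =>
    eq_of_matchingColoring_eq hβA hx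
  have hcor : ∀ x ∉ S, c x ∈ A ∨ c x = β := fun x => matchingColoring_mem_or
  have hmem : ∀ x, c x ∈ S := fun x => by
    by_cases hx : x ∈ S
    · rwa [hcS x hx]
    · exact (hcor x hx).elim (fun h => hAS h) (fun h => h ▸ hβ)
  refine ⟨fun x => ⟨c x, hmem x⟩, IsONCF.of_comp (f := Subtype.val) fun s => ?_⟩
  by_cases hs : s ∈ S
  · rcases hwit s hs with ⟨t, ht, hst, htβ, htA⟩ | ⟨a, ha, hsa, hsy⟩
    · refine ⟨t, hst, fun x hx hxt (hc : c x = c t) => ?_⟩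
      rw [hcS t ht] at hc
      by_cases hxS : x ∈ S
      · exact hxt (hcS x hxS ▸ hc)
      · rcases hcor x hxS with hA | hβ
        · rw [hc] at hA
          exact htA hA (hceq x hxS t hA hc ▸ hx)
        · exact htβ (hc ▸ hβ)
    · refine ⟨y a, hsy, fun x hx hxy (hc : c x = c (y a)) => ?_⟩
      rw [hcy a ha] at hc
      by_cases hxS : x ∈ S
      · rw [hcS x hxS] at hc
        exact hsa (hc ▸ hx)
      · exact hxy (hceq x hxS a ha hc)
  · obtain ⟨u, hu⟩ := hnbr s
    refine ⟨u, hu, fun x hx hxu (hc : c x = c u) => hxu ?_⟩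
    rwa [hcS x ((hS hx).resolve_left hs), hcS u ((hS hu).resolve_left hs)] at hc

def pendantSet (G : SimpleGraph V) (S : Finset V) (β : V) : Set V :=
  {s | s ∈ S ∧ s ≠ β ∧ ∀ r ∈ S, G.Adj s r → r = β}

theorem pendantSet_subset : pendantSet G S β ⊆ S := fun _ hs => hs.1

theorem isIndepSet_pendantSet : G.IsIndepSet (pendantSet G S β) :=
  fun _ hs _ ht _ hst => ht.2.1 (hs.2.2 _ ht.1 hst)

theorem exists_adj_ne_of_notMem_pendantSet {s : V} (hs : s ∈ S) (hsβ : s ≠ β)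
    (hsP : s ∉ pendantSet G S β) : ∃ r ∈ S, G.Adj s r ∧ r ≠ β := by
  by_contra! h
  exact hsP ⟨hs, hsβ, h⟩

/-- The vertices of `pendantSet G S β` that see no `y₀ d` are matched once more by Hall's
theorem; the others use such a `y₀ d` as their uniquely coloured neighbour. -/
theorem IsMinVertexCover.exists_isONCF_of_pendantSet [Fintype V] (hS : G.IsMinVertexCover S)
    (hnbr : ∀ v, ∃ u, G.Adj v u) (hβ : β ∈ S) {y₀ : V → V}
    (hy₀ : Set.InjOn y₀ (pendantSet G S β \ G.neighborSet β))
    (hy₀adj : ∀ d ∈ pendantSet G S β \ G.neighborSet β, G.Adj d (y₀ d) ∧ y₀ d ∉ S)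
    (hwit : (∃ t ∈ S, G.Adj β t ∧ t ∉ pendantSet G S β) ∨
      ∃ d ∈ pendantSet G S β \ G.neighborSet β, G.Adj β (y₀ d)) :
    ∃ c : V → S, IsONCF G c := by
  classical
  set P := pendantSet G S β
  set D := P \ G.neighborSet β
  set Q : Set V := {s | s ∈ P ∧ ∀ d ∈ D, ¬ G.Adj s (y₀ d)}
  have hQP : Q ⊆ P := fun _ hq => hq.1
  have hDQ : Disjoint D Q := Set.disjoint_left.mpr fun d hd hdQ => hdQ.2 d hd (hy₀adj d hd).1
  obtain ⟨z, hz, hzadj⟩ := hS.exists_injOn_adj_notMem (hQP.trans pendantSet_subset)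
    (isIndepSet_pendantSet.mono hQP)
  set y := Q.piecewise z y₀
  have hyD : ∀ d ∈ D, y d = y₀ d := fun d hd =>
    Set.piecewise_eq_of_notMem _ _ _ (Set.disjoint_left.mp hDQ hd)
  have hyQ : ∀ q ∈ Q, y q = z q := fun q hq => Set.piecewise_eq_of_mem _ _ _ hq
  have hyadj : ∀ a ∈ D ∪ Q, G.Adj a (y a) ∧ y a ∉ S := by
    rintro a (ha | ha)
    exacts [hyD a ha ▸ hy₀adj a ha, hyQ a ha ▸ hzadj a ha]
  have hAP : D ∪ Q ⊆ P := Set.union_subset Set.sdiff_subset hQP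
  refine exists_isONCF_of_matching hS.1 hnbr hβ (hAP.trans pendantSet_subset)
    (fun h => (hAP h).2.1 rfl) ((Set.injOn_union hDQ).mpr ⟨hy₀.congr fun d hd => (hyD d hd).symm,
      hz.congr fun q hq => (hyQ q hq).symm, fun d hd q hq hdq => ?_⟩)
    (fun a ha => (hyadj a ha).2) fun s hs => ?_
  · rw [hyD d hd, hyQ q hq] at hdq
    exact hq.2 d hd (hdq ▸ (hzadj q hq).1)
  by_cases hsP : s ∈ P
  · by_cases hsA : s ∈ D ∪ Q
    · exact Or.inr ⟨s, hsA, G.irrefl, (hyadj s hsA).1⟩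
    · obtain ⟨d, hd, hsd⟩ : ∃ d ∈ D, G.Adj s (y₀ d) := by
        by_contra! h
        exact hsA (Or.inr ⟨hsP, h⟩)
      exact Or.inr ⟨d, Or.inl hd, fun h => isIndepSet_pendantSet hsP hd.1 h.ne h,
        (hyD d hd).symm ▸ hsd⟩
  · by_cases hsβ : s = β
    · subst hsβ
      rcases hwit with ⟨t, ht, hst, htP⟩ | ⟨d, hd, hsd⟩
      · exact Or.inl ⟨t, ht, hst, hst.ne.symm, fun htA => absurd (hAP htA) htP⟩
      · exact Or.inr ⟨d, Or.inl hd, fun h => hd.2 h, (hyD d hd).symm ▸ hsd⟩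
    · obtain ⟨r, hr, hsr, hrβ⟩ := exists_adj_ne_of_notMem_pendantSet hs hsβ hsP
      exact Or.inl ⟨r, hr, hsr, hrβ, fun hrA => absurd ((hAP hrA).2.2 s hs hsr.symm) hsβ⟩

theorem IsMinVertexCover.exists_isONCF_of_isolated [Fintype V] (hS : G.IsMinVertexCover S)
    (hconn : G.Connected) (hstar : ¬ IsStarGraph G) (hnbr : ∀ v, ∃ u, G.Adj v u) {d : V}
    (hd : d ∈ S) (hdS : ∀ r ∈ S, ¬ G.Adj d r) : ∃ c : V → S, IsONCF G c := by
  obtain ⟨v, hdv, β, hvβ, hβd⟩ : ∃ v, G.Adj d v ∧ ∃ β, G.Adj v β ∧ β ≠ d := by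
    by_contra! h
    exact hstar (hconn.isStarGraph_of_pendant_neighbors h)
  have hvS : v ∉ S := fun hv => hdS v hv hdv
  have hβ : β ∈ S := (hS.1 hvβ).resolve_left hvS
  have hdD : d ∈ pendantSet G S β \ G.neighborSet β :=
    ⟨⟨hd, hβd.symm, fun r hr h => absurd h (hdS r hr)⟩, fun h => hdS β hβ h.symm⟩
  obtain ⟨y, hy, hyadj, hhit⟩ := hS.exists_injOn_adj_notMem_mem
    (Set.sdiff_subset.trans pendantSet_subset) (isIndepSet_pendantSet.mono Set.sdiff_subset)
    hdD hdv hvS hvβ.symm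
  exact hS.exists_isONCF_of_pendantSet hnbr hβ hy hyadj (Or.inr hhit)

theorem IsMinVertexCover.exists_isONCF_of_adj_adj [Fintype V] (hS : G.IsMinVertexCover S)
    (hnbr : ∀ v, ∃ u, G.Adj v u) {p t r : V} (hp : p ∈ S) (ht : t ∈ S) (hr : r ∈ S)
    (hpt : G.Adj p t) (htr : G.Adj t r) (hrp : r ≠ p) : ∃ c : V → S, IsONCF G c := by
  obtain ⟨y, hy, hyadj⟩ := hS.exists_injOn_adj_notMem
    (Set.sdiff_subset.trans pendantSet_subset) (isIndepSet_pendantSet.mono Set.sdiff_subset)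
  exact hS.exists_isONCF_of_pendantSet hnbr hp hy hyadj
    (Or.inl ⟨t, ht, hpt, fun htP => hrp (htP.2.2 r hr htr)⟩)

theorem exists_isONCF_of_adj_not_adj (hS : G.IsVertexCover S) (hnbr : ∀ v, ∃ u, G.Adj v u)
    (hpartner : ∀ s ∈ S, ∃ t ∈ S, G.Adj s t)
    (hunique : ∀ p ∈ S, ∀ t ∈ S, G.Adj p t → ∀ r ∈ S, G.Adj t r → r = p) {a b v : V}
    (ha : a ∈ S) (hb : b ∈ S) (hab : G.Adj a b) (hvS : v ∉ S) (hbv : G.Adj b v)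
    (hav : ¬ G.Adj a v) : ∃ c : V → S, IsONCF G c := by
  refine exists_isONCF_of_matching hS hnbr ha (A := {b}) (y := fun _ => v) (by simpa using hb)
    (by simpa using hab.ne) (Set.injOn_singleton _ _) (by simpa using hvS) fun s hs => ?_
  by_cases hsb : s = b
  · subst hsb
    exact Or.inr ⟨s, rfl, G.irrefl, hbv⟩
  obtain ⟨t, ht, hst⟩ := hpartner s hs
  refine Or.inl ⟨t, ht, hst, fun hta => hsb (hunique b hb a ha hab.symm s hs (hta ▸ hst.symm)),
    fun (htb : t = b) hsv => hav ?_⟩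
  subst htb
  exact hunique a ha t ht hab s hs hst.symm ▸ hsv

theorem exists_isONCF_of_not_adj_adj (hS : G.IsVertexCover S) (hnbr : ∀ v, ∃ u, G.Adj v u)
    (hpartner : ∀ s ∈ S, ∃ t ∈ S, G.Adj s t)
    (hunique : ∀ p ∈ S, ∀ t ∈ S, G.Adj p t → ∀ r ∈ S, G.Adj t r → r = p)
    (hpartner_adj : ∀ a ∈ S, ∀ b ∈ S, G.Adj a b → ∀ v ∉ S, G.Adj b v → G.Adj a v) {s₀ s' u : V}
    (hs₀ : s₀ ∈ S) (hs' : s' ∈ S) (hs₀s' : ¬ G.Adj s₀ s') (huS : u ∉ S) (hs₀u : G.Adj s₀ u)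
    (hs'u : ¬ G.Adj s' u) : ∃ c : V → S, IsONCF G c := by
  have hs'0 : s' ≠ s₀ := fun h => hs'u (h ▸ hs₀u)
  refine exists_isONCF_of_matching hS hnbr hs₀ (A := {s'}) (y := fun _ => u) (by simpa using hs')
    (by simpa using hs'0.symm) (Set.injOn_singleton _ _) (by simpa using huS) fun s hs => ?_
  by_cases hss₀ : s = s₀
  · subst hss₀
    exact Or.inr ⟨s', rfl, hs₀s', hs₀u⟩
  obtain ⟨t, ht, hst⟩ := hpartner s hs
  by_cases hts₀ : t = s₀
  · subst hts₀
    exact Or.inr ⟨s', rfl, fun h => hs'0 (hunique t ht s hs hst.symm s' hs' h),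
      hpartner_adj s hs t ht hst u huS hs₀u⟩
  · exact Or.inl ⟨t, ht, hst, hts₀, fun (hts' : t = s') hsu =>
      hs'u (hts' ▸ hpartner_adj t ht s hs hst.symm u huS hsu)⟩

theorem IsMinVertexCover.exists_isONCF_of_shared_neighbors [Fintype V] (hS : G.IsMinVertexCover S)
    (hnbr : ∀ v, ∃ u, G.Adj v u)
    (hunique : ∀ p ∈ S, ∀ t ∈ S, G.Adj p t → ∀ r ∈ S, G.Adj t r → r = p)
    (hshare : ∀ s ∈ S, ∀ s' ∈ S, ∀ u ∉ S, G.Adj s u → G.Adj s' u) {a b s' : V} (ha : a ∈ S)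
    (hb : b ∈ S) (hs' : s' ∈ S) (hab : G.Adj a b) (hs'a : s' ≠ a) (hs'b : s' ≠ b) :
    ∃ c : V → S, IsONCF G c := by
  have hAS : ({a, s'} : Set V) ⊆ S := Set.insert_subset ha (Set.singleton_subset_iff.mpr hs')
  have has' : ¬ G.Adj a s' := fun h => hs'b (hunique b hb a ha hab.symm s' hs' h)
  obtain ⟨y, hy, hyadj⟩ := hS.exists_injOn_adj_notMem hAS
    (Set.pairwise_pair.mpr fun _ => ⟨has', fun h => has' h.symm⟩)
  refine exists_isONCF_of_matching hS.1 hnbr hb hAS (by simp [hab.ne', hs'b.symm]) hy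
    (fun x hx => (hyadj x hx).2) fun s hs => Or.inr ?_
  have hya := hyadj a (by simp)
  by_cases hsa : s = a
  · subst hsa
    exact ⟨s, by simp, G.irrefl, hya.1⟩
  by_cases hsb : s = b
  · subst hsb
    have hys' := hyadj s' (by simp)
    exact ⟨s', by simp, fun h => hs'a (hunique a ha s hs hab s' hs' h),
      hshare s' hs' s hs _ hys'.2 hys'.1⟩
  · exact ⟨a, by simp, fun h => hsb (hunique b hb a ha hab.symm s hs h.symm),
      hshare a ha s hs _ hya.2 hya.1⟩

theorem IsMinVertexCover.exists_isONCF_of_partners [Fintype V] [Nonempty V]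
    (hS : G.IsMinVertexCover S) (hedgestar : ¬ IsEdgeStarGraph G) (hnbr : ∀ v, ∃ u, G.Adj v u)
    (hpartner : ∀ s ∈ S, ∃ t ∈ S, G.Adj s t)
    (hunique : ∀ p ∈ S, ∀ t ∈ S, G.Adj p t → ∀ r ∈ S, G.Adj t r → r = p) :
    ∃ c : V → S, IsONCF G c := by
  by_cases h₁ : ∃ a ∈ S, ∃ b ∈ S, G.Adj a b ∧ ∃ v ∉ S, G.Adj b v ∧ ¬ G.Adj a v
  · obtain ⟨a, ha, b, hb, hab, v, hvS, hbv, hav⟩ := h₁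
    exact exists_isONCF_of_adj_not_adj hS.1 hnbr hpartner hunique ha hb hab hvS hbv hav
  push Not at h₁
  by_cases h₂ : ∃ s ∈ S, ∃ s' ∈ S, ¬ G.Adj s s' ∧ ∃ u ∉ S, G.Adj s u ∧ ¬ G.Adj s' u
  · obtain ⟨s, hs, s', hs', hss', u, huS, hsu, hs'u⟩ := h₂
    exact exists_isONCF_of_not_adj_adj hS.1 hnbr hpartner hunique h₁ hs hs' hss' huS hsu hs'u
  push Not at h₂
  have hshare : ∀ s ∈ S, ∀ s' ∈ S, ∀ u ∉ S, G.Adj s u → G.Adj s' u := by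
    intro s hs s' hs' u hu hsu
    by_cases h : G.Adj s s'
    exacts [h₁ s' hs' s hs h.symm u hu hsu, h₂ s hs s' hs' h u hu hsu]
  obtain ⟨a, ha⟩ : ∃ a, a ∈ S := by
    obtain ⟨v⟩ := ‹Nonempty V›
    obtain ⟨u, hvu⟩ := hnbr v
    exact (hS.1 hvu).elim (⟨v, ·⟩) (⟨u, ·⟩)
  obtain ⟨b, hb, hab⟩ := hpartner a ha
  by_cases h₃ : ∃ s' ∈ S, s' ≠ a ∧ s' ≠ b
  · obtain ⟨s', hs', hs'a, hs'b⟩ := h₃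
    exact hS.exists_isONCF_of_shared_neighbors hnbr hunique hshare ha hb hs' hab hs'a hs'b
  push Not at h₃
  refine absurd (isEdgeStarGraph_of_isVertexCover_pair hab (hS.1.subset fun x hx => ?_)
    fun w hwa hwb => ?_) hedgestar
  · exact (em (x = a)).imp_right (h₃ x hx)
  · have hwS : w ∉ S := fun hw => hwb (h₃ w hw hwa)
    obtain ⟨x, hwx⟩ := hnbr w
    have hxS : x ∈ S := (hS.1 hwx).resolve_left hwS
    exact ⟨(hshare x hxS a ha w hwS hwx.symm).symm, (hshare x hxS b hb w hwS hwx.symm).symm⟩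

theorem IsMinVertexCover.exists_isONCF [Fintype V] (hS : G.IsMinVertexCover S)
    (hconn : G.Connected) (hstar : ¬ IsStarGraph G) (hedgestar : ¬ IsEdgeStarGraph G) :
    ∃ c : V → S, IsONCF G c := by
  have hnbr := hconn.exists_adj_of_not_isStarGraph hstar
  by_cases hA : ∃ d ∈ S, ∀ r ∈ S, ¬ G.Adj d r
  · obtain ⟨d, hd, hdS⟩ := hA
    exact hS.exists_isONCF_of_isolated hconn hstar hnbr hd hdS
  push Not at hA
  by_cases hB : ∃ p ∈ S, ∃ t ∈ S, G.Adj p t ∧ ∃ r ∈ S, G.Adj t r ∧ r ≠ p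
  · obtain ⟨p, hp, t, ht, hpt, r, hr, htr, hrp⟩ := hB
    exact hS.exists_isONCF_of_adj_adj hnbr hp ht hr hpt htr hrp
  push Not at hB
  have := hconn.nonempty
  exact hS.exists_isONCF_of_partners hedgestar hnbr hA hB

end SimpleGraph

theorem ONCF_le_vc_general {V : Type*} [Fintype V]
    (G : SimpleGraph V) (hconn : G.Connected)
    (hstar : ¬ IsStarGraph G) (hedgestar : ¬ IsEdgeStarGraph G)
    (S : Finset V) (hvc : ∀ ⦃a b : V⦄, G.Adj a b → a ∈ S ∨ b ∈ S)
    (k : ℕ) (hk : S.card = k) :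
    ∃ c : V → Fin k, IsONCF G c := by
  obtain ⟨S₀, hS₀, hcard⟩ := SimpleGraph.IsVertexCover.exists_isMinVertexCover (S := S) hvc
  obtain ⟨c, hc⟩ := hS₀.exists_isONCF hconn hstar hedgestar
  obtain ⟨e⟩ : Nonempty (S₀ ↪ Fin k) :=
    Function.Embedding.nonempty_of_card_le (by simpa [hk] using hcard)
  exact ⟨e ∘ c, hc.comp e.injective⟩

/-- A connected graph with at least two vertices that is neither a star graph nor
an edge-star graph, having a vertex cover of size `k`, admits a `k`-ONCF-coloring. -/
theorem ONCF_le_vc {V : Type*} [Fintype V] [DecidableEq V]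
    (G : SimpleGraph V) (hconn : G.Connected) (hcard : 2 ≤ Fintype.card V)
    (hstar : ¬ IsStarGraph G) (hedgestar : ¬ IsEdgeStarGraph G)
    (S : Finset V) (hvc : ∀ ⦃a b : V⦄, G.Adj a b → a ∈ S ∨ b ∈ S)
    (k : ℕ) (hk : S.card = k) :
    ∃ c : V → Fin k, IsONCF G c :=
  ONCF_le_vc_general G hconn hstar hedgestar S hvc k hk
end

section
/- Let G be a finite simple graph in which every vertex has at least one neighbor, and suppose G has a tree decomposition of width t: a finite tree T together with bags X_u ⊆ V(G) for u ∈ V(T) such that (i) every vertex of G lies in some bag, (ii) for every edge {x,y} of G some bag contains both x and y, (iii) for every vertex x of G the set of tree nodes whose bag contains x induces a connected subtree of T, and (iv) |X_u| ≤ t + 1 for every u ∈ V(T). Then G admits a (2t+1)-ONCF-coloring; that is, χ_ON(G) ≤ 2t + 1. -/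
open Finset

namespace SimpleGraph

variable {V W : Type*} {T : SimpleGraph W}

theorem IsAcyclic.length_eq_dist (hT : T.IsAcyclic) {u v : W} {P : T.Walk u v}
    (hP : P.IsPath) : P.length = T.dist u v := by
  obtain ⟨Q, hQ, hQlen⟩ := P.reachable.exists_path_of_dist
  rw [← hQlen, Subtype.mk.inj <| (hT.subsingleton_path u v).elim ⟨P, hP⟩ ⟨Q, hQ⟩]

theorem IsAcyclic.dist_lt_of_mem_support (hT : T.IsAcyclic) {u v w : W} {P : T.Walk u v}
    (hP : P.IsPath) (hw : w ∈ P.support) (hwu : w ≠ u) : T.dist w v < T.dist u v := by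
  obtain ⟨q, r, -, -, rfl⟩ := hP.mem_support_iff_exists_append.mp hw
  have hq : q.length ≠ 0 := fun h => hwu (Walk.eq_of_length_eq_zero h).symm
  have := dist_le r
  rw [← hT.length_eq_dist hP, Walk.length_append]
  omega

theorem IsAcyclic.mem_of_mem_support_of_preconnected (hT : T.IsAcyclic) {S : Set W}
    (hS : (T.induce S).Preconnected) {a b : W} (ha : a ∈ S) (hb : b ∈ S) {P : T.Walk a b}
    (hP : P.IsPath) {w : W} (hw : w ∈ P.support) : w ∈ S := by
  classical
  obtain ⟨q⟩ := hS ⟨a, ha⟩ ⟨b, hb⟩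
  let q' := q.map (Embedding.induce S).toHom
  have hPq : P = q'.bypass :=
    Subtype.mk.inj <| (hT.subsingleton_path a b).elim ⟨P, hP⟩ ⟨_, q'.bypass_isPath⟩
  obtain ⟨⟨w', hw'⟩, -, rfl⟩ :=
    List.mem_map.mp (q.support_map _ ▸ q'.support_bypass_subset_support (hPq ▸ hw))
  exact hw'

/-- The path inside `S` from `u` to `m` followed by a path from `m` to `r` is a path, since every
vertex of the latter but `m` is nearer to `r` than `m`. -/
theorem IsAcyclic.mem_support_of_isMinOn (hT : T.IsAcyclic) {S : Set W}
    (hS : (T.induce S).Preconnected) {r m u : W} (hm : m ∈ S)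
    (hmin : IsMinOn (T.dist · r) S m) (hu : u ∈ S) {P : T.Walk u r}
    (hP : P.IsPath) : m ∈ P.support := by
  have hum : T.Reachable u m := (hS ⟨u, hu⟩ ⟨m, hm⟩).map (Embedding.induce S).toHom
  obtain ⟨R, hR⟩ := hum.exists_isPath
  obtain ⟨g, hg⟩ := (hum.symm.trans P.reachable).exists_isPath
  have hRg : (R.append g).IsPath := by
    rw [Walk.isPath_def, Walk.support_append, List.nodup_append]
    refine ⟨hR.support_nodup, hg.support_nodup.sublist (List.tail_sublist _), ?_⟩
    rintro w hwR w' hwg rfl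
    have hwm : w ≠ m := by
      rintro rfl
      have := hg.support_nodup
      rw [← Walk.cons_tail_support, List.nodup_cons] at this
      exact this.1 hwg
    have := hT.dist_lt_of_mem_support hg (List.mem_of_mem_tail hwg) hwm
    have := isMinOn_iff.mp hmin w (hT.mem_of_mem_support_of_preconnected hS hu hm hR hwR)
    omega
  rw [Subtype.mk.inj <| (hT.subsingleton_path u r).elim ⟨P, hP⟩ ⟨_, hRg⟩]
  exact (Walk.mem_support_append_iff _ _).mpr (Or.inl R.end_mem_support)

theorem IsAcyclic.mem_of_isMinOn_of_mem_inter (hT : T.IsAcyclic) {S S' : Set W}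
    (hS : (T.induce S).Preconnected) (hS' : (T.induce S').Preconnected) {r m m' u : W}
    (hm : m ∈ S) (hmin : IsMinOn (T.dist · r) S m)
    (hm' : m' ∈ S') (hmin' : IsMinOn (T.dist · r) S' m')
    (hu : u ∈ S) (hu' : u ∈ S') (hur : T.Reachable u r) (hle : T.dist m' r ≤ T.dist m r) :
    m ∈ S' := by
  obtain ⟨P, hP⟩ := hur.exists_isPath
  have hmP := hT.mem_support_of_isMinOn hS hm hmin hu hP
  obtain ⟨q, g, hq, hg, rfl⟩ :=
    hP.mem_support_iff_exists_append.mp (hT.mem_support_of_isMinOn hS' hm' hmin' hu' hP)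
  rcases (Walk.mem_support_append_iff q g).mp hmP with hmq | hmg
  · exact hT.mem_of_mem_support_of_preconnected hS' hu' hm' hq hmq
  · by_contra hmS'
    have := hT.dist_lt_of_mem_support hg hmg (ne_of_mem_of_not_mem hm' hmS').symm
    omega

/-- Rooting the tree, `top x` is the vertex of the subtree `S x` nearest to the root and `h x` its
distance to the root. -/
theorem IsTree.exists_ranked_tops (hT : T.IsTree) (S : V → Set W)
    (hS : ∀ x, (T.induce (S x)).Connected) :
    ∃ (top : V → W) (h : V → ℕ), (∀ x, top x ∈ S x) ∧
      ∀ ⦃u x y⦄, u ∈ S x → u ∈ S y → h y ≤ h x → top x ∈ S y := by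
  obtain ⟨r⟩ := hT.connected.nonempty
  have hne : ∀ x, (S x).Nonempty := fun x => ⟨_, (hS x).nonempty.some.2⟩
  let top x := Function.argminOn (T.dist · r) (S x) (hne x)
  have htop x : top x ∈ S x := Function.argminOn_mem _ _ _
  have hmin x : IsMinOn (T.dist · r) (S x) (top x) := isMinOn_iff.mpr fun _ hw =>
    Function.argminOn_le (T.dist · r) (S x) hw
  refine ⟨top, fun x => T.dist (top x) r, htop, fun u x y hx hy hle => ?_⟩
  exact hT.isAcyclic.mem_of_isMinOn_of_mem_inter (hS x).preconnected (hS y).preconnected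
    (htop x) (hmin x) (htop y) (hmin y) hx hy (hT.connected u r) hle

theorem colorable_succ_of_degenerate [Fintype V] [LinearOrder V] (F : SimpleGraph V) (k : ℕ)
    (hk : ∀ x, {y | y < x ∧ F.Adj x y}.ncard ≤ k) : F.Colorable (k + 1) := by
  suffices ∀ s : Finset V, ∃ c : V → Fin (k + 1), ∀ x ∈ s, ∀ y ∈ s, F.Adj x y → c x ≠ c y by
    obtain ⟨c, hc⟩ := this univ
    exact ⟨Coloring.mk c fun hxy => hc _ (mem_univ _) _ (mem_univ _) hxy⟩
  intro s
  induction s using Finset.induction_on_max with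
  | empty => exact ⟨fun _ => 0, by simp⟩
  | insert a s hlt ih =>
    obtain ⟨c, hc⟩ := ih
    set earlier := (Set.toFinite {y | y < a ∧ F.Adj a y}).toFinset
    have hcard : #(earlier.image c) < #(univ : Finset (Fin (k + 1))) := by
      rw [card_univ, Fintype.card_fin, Nat.lt_succ_iff]
      exact card_image_le.trans ((Set.ncard_eq_toFinset_card _ _).symm.trans_le (hk a))
    obtain ⟨col, -, hcol⟩ := exists_mem_notMem_of_card_lt_card hcard
    have hnew : ∀ y ∈ s, F.Adj a y → col ≠ c y := fun y hy hay hcy =>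
      hcol (hcy ▸ mem_image_of_mem c (by simp [earlier, hlt y hy, hay]))
    refine ⟨Function.update c a col, fun x hx y hy hxy => ?_⟩
    rcases mem_insert.mp hx with rfl | hxs <;> rcases mem_insert.mp hy with rfl | hys
    · exact absurd hxy F.irrefl
    · rw [Function.update_self, Function.update_of_ne (hlt y hys).ne]
      exact hnew y hys hxy
    · rw [Function.update_self, Function.update_of_ne (hlt x hxs).ne]
      exact (hnew x hxs hxy.symm).symm
    · rw [Function.update_of_ne (hlt x hxs).ne, Function.update_of_ne (hlt y hys).ne]
      exact hc x hxs y hys hxy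

def conflictGraph (G : SimpleGraph V) (p : V → V) : SimpleGraph V :=
  fromRel fun a b => ∃ v, p v = a ∧ G.Adj v b

theorem isONCF_of_coloring {G : SimpleGraph V} {p : V → V} (hp : ∀ v, G.Adj v (p v))
    {α : Type*} (C : (conflictGraph G p).Coloring α) : IsONCF G C :=
  fun v => ⟨p v, hp v, fun _ hw hwp =>
    C.valid ((fromRel_adj _ _ _).mpr ⟨hwp, Or.inr ⟨v, rfl, hw⟩⟩)⟩

theorem ncard_lt_adj_conflictGraph_le [LinearOrder V] {G : SimpleGraph V}
    {p : V → V} (hp : ∀ v, G.Adj v (p v)) (hpmin : ∀ ⦃v w⦄, G.Adj v w → p v ≤ w)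
    (X : W → Finset V) (t : ℕ) (hedges : ∀ ⦃x y : V⦄, G.Adj x y → ∃ u, x ∈ X u ∧ y ∈ X u)
    (hwidth : ∀ u, #(X u) ≤ t + 1) (top : V → W) (htop : ∀ x, x ∈ X (top x))
    (hlow : ∀ ⦃u x y⦄, x ∈ X u → y ∈ X u → y < x → y ∈ X (top x)) (x : V) :
    {y | y < x ∧ (conflictGraph G p).Adj x y}.ncard ≤ 2 * t := by
  have hlow_adj : ∀ ⦃x y⦄, G.Adj x y → y < x → y ∈ X (top x) := fun x y hxy hyx => by
    obtain ⟨u, hx, hy⟩ := hedges hxy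
    exact hlow hx hy hyx
  set B := (X (top x)).erase x
  have hB : #B ≤ t := by
    have := hwidth (top x)
    rw [card_erase_of_mem (htop x)]
    omega
  have hsub : {y | y < x ∧ (conflictGraph G p).Adj x y} ⊆ ↑(B ∪ B.image p) := by
    rintro y ⟨hyx, hne, ⟨v, rfl, hvy⟩ | ⟨v, rfl, hvx⟩⟩
    · exact absurd (hpmin hvy) hyx.not_ge
    -- either `v` lies in `X (top x)`, or `x` and `y = p v` both lie in `X (top v)`
    rcases lt_or_gt_of_ne (G.ne_of_adj hvx) with hvx' | hxv
    · exact mem_coe.mpr <| mem_union_right _ <| mem_image_of_mem p <|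
        mem_erase.mpr ⟨G.ne_of_adj hvx, hlow_adj hvx.symm hvx'⟩
    · have hxv' := hlow_adj hvx hxv
      have hyv := hlow_adj (hp v) (hyx.trans hxv)
      exact mem_coe.mpr <| mem_union_left _ <| mem_erase.mpr ⟨hne.symm, hlow hxv' hyv hyx⟩
  calc _ ≤ #(B ∪ B.image p) := by
        rw [← Set.ncard_coe_finset]; exact Set.ncard_le_ncard hsub (Finset.finite_toSet _)
    _ ≤ #B + #B := (card_union_le _ _).trans (Nat.add_le_add_left card_image_le _)
    _ ≤ 2 * t := by omega

end SimpleGraph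

theorem ONCF_le_two_tw_add_one_general {V W : Type*} [Fintype V] (G : SimpleGraph V)
    (hnbr : ∀ v : V, ∃ u : V, G.Adj v u)
    (T : SimpleGraph W) (hT : T.IsTree)
    (X : W → Finset V) (t : ℕ)
    (hedges : ∀ ⦃x y : V⦄, G.Adj x y → ∃ u : W, x ∈ X u ∧ y ∈ X u)
    (hconn : ∀ x : V, (T.induce {u : W | x ∈ X u}).Connected)
    (hwidth : ∀ u : W, (X u).card ≤ t + 1) :
    ∃ c : V → Fin (2 * t + 1), IsONCF G c := by
  obtain ⟨top, h, htop, hlow⟩ := hT.exists_ranked_tops (fun x => {u | x ∈ X u}) hconn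
  let e := Fintype.equivFin V
  let _ : LinearOrder V := LinearOrder.lift' (fun x => toLex (h x, e x)) fun x y hxy =>
    e.injective (Prod.ext_iff.mp (toLex.injective hxy)).2
  have hlow' : ∀ ⦃u x y⦄, x ∈ X u → y ∈ X u → y < x → y ∈ X (top x) := fun u x y hx hy hyx =>
    hlow hx hy <| (Prod.Lex.toLex_lt_toLex.mp hyx).elim le_of_lt fun h => h.1.le
  have hleast : ∀ v, ∃ w, G.Adj v w ∧ ∀ ⦃w'⦄, G.Adj v w' → w ≤ w' := fun v =>
    Set.exists_min_image (G.neighborSet v) id (Set.toFinite _) (hnbr v)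
  choose p hp hpmin using hleast
  obtain ⟨C⟩ := (SimpleGraph.conflictGraph G p).colorable_succ_of_degenerate (2 * t)
    (SimpleGraph.ncard_lt_adj_conflictGraph_le hp hpmin X t hedges hwidth top htop hlow')
  exact ⟨C, SimpleGraph.isONCF_of_coloring hp C⟩

/-- If every vertex of `G` has a neighbor and `G` has a tree decomposition of
width `t` (a finite tree `T` with bags `X u` such that every vertex is in some bag,
every edge is contained in some bag, the bags containing a fixed vertex induce a
connected subtree, and each bag has at most `t + 1` vertices), then `G` admits a
`(2t+1)`-ONCF-coloring. -/
theorem ONCF_le_two_tw_add_one {V W : Type*} [Fintype V] [Fintype W]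
    [DecidableEq V] (G : SimpleGraph V)
    (hnbr : ∀ v : V, ∃ u : V, G.Adj v u)
    (T : SimpleGraph W) (hT : T.IsTree)
    (X : W → Finset V) (t : ℕ)
    (hbags : ∀ x : V, ∃ u : W, x ∈ X u)
    (hedges : ∀ ⦃x y : V⦄, G.Adj x y → ∃ u : W, x ∈ X u ∧ y ∈ X u)
    (hconn : ∀ x : V, (T.induce {u : W | x ∈ X u}).Connected)
    (hwidth : ∀ u : W, (X u).card ≤ t + 1) :
    ∃ c : V → Fin (2 * t + 1), IsONCF G c :=
  ONCF_le_two_tw_add_one_general G hnbr T hT X t hedges hconn hwidth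
end
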